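/- arXiv:2208.11649 — 3 statements merged into one kernel-verified Lean document; each statement's English description precedes it below -/
import Mathlib

section
/- Let N ≥ 3 be an integer and let δ, φ ∈ ℤ/Nℤ. Then the set C_{δ,φ}(N) of invertible matrices of the form [[a+bφ, b],[δb, a]] (a, b ∈ ℤ/Nℤ) is a subgroup of GL(2, ℤ/Nℤ), the matrix γ_φ = [[−1, 0],[φ, 1]] does not belong to C_{δ,φ}(N), and C_{δ,φ}(N) is a subgroup of index 2 in N_{δ,φ}(N), the subgroup generated by C_{δ,φ}(N) and γ_φ. -/
/-!
The matrices `[[a + bφ, b], [δb, a]]` are the elements `a + bJ` of the commutative algebra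
`R[J]`, `J = [[φ, 1], [δ, 0]]`; they are closed under products and adjugates, so the invertible
ones form a group `C`. Conjugation by the involution `γ_φ` is the "Galois conjugation"
`a + bJ ↦ (a + bφ) - bJ`, so `γ_φ` normalizes `C`, and `γ_φ ∈ C` would force `2 = 0`.
Hence `⟨C, γ_φ⟩ = C ∪ C γ_φ` contains `C` with index two.
-/

open scoped MatrixGroups

/-- The matrix `γ_φ = [[−1, 0],[φ, 1]]`, as an element of `GL(2, ℤ/Nℤ)` (it is an
involution, hence its own inverse). -/
def gammaPhi (N : ℕ) (φ : ZMod N) : GL (Fin 2) (ZMod N) :=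
  ⟨!![-1, 0; φ, 1], !![-1, 0; φ, 1],
    by ext i j; fin_cases i <;> fin_cases j <;>
      simp [Matrix.mul_apply, Fin.sum_univ_succ],
    by ext i j; fin_cases i <;> fin_cases j <;>
      simp [Matrix.mul_apply, Fin.sum_univ_succ]⟩


open scoped Pointwise

namespace Subgroup

variable {G : Type*} [Group G] {H : Subgroup G} {t : G}

theorem mem_normalizer_of_conj_mem_of_sq_mem (hconj : ∀ h ∈ H, t * h * t⁻¹ ∈ H)
    (ht2 : t ^ 2 ∈ H) : t ∈ normalizer (H : Set G) := by
  refine mem_normalizer_iff.mpr fun h => ⟨hconj h, fun hh => ?_⟩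
  have hinv : (t ^ 2)⁻¹ ∈ H := inv_mem ht2
  have : h = (t ^ 2)⁻¹ * (t * (t * h * t⁻¹) * t⁻¹) * t ^ 2 := by group
  rw [this]
  exact mul_mem (mul_mem hinv (hconj _ hh)) ht2

theorem zpow_mem_or_zpow_add_one_mem (ht2 : t ^ 2 ∈ H) (n : ℤ) :
    t ^ n ∈ H ∨ t ^ (n + 1) ∈ H := by
  have hpow : ∀ k : ℤ, t ^ (2 * k) ∈ H := fun k => by
    rw [zpow_mul]; exact zpow_mem (by exact_mod_cast ht2) k
  obtain ⟨k, rfl | rfl⟩ := Int.even_or_odd' n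
  · exact .inl (hpow k)
  · exact .inr (by rw [show 2 * k + 1 + 1 = 2 * (k + 1) by ring]; exact hpow _)

theorem relIndex_sup_closure_singleton_eq_two (ht : t ∉ H) (ht2 : t ^ 2 ∈ H)
    (hnorm : t ∈ normalizer (H : Set G)) : H.relIndex (H ⊔ closure {t}) = 2 := by
  have hcoe : ((H ⊔ closure {t} : Subgroup G) : Set G) = (H : Set G) * zpowers t := by
    rw [← zpowers_eq_closure]
    exact coe_mul_of_right_le_normalizer_left H _ (zpowers_le.mpr hnorm)
  refine relIndex_eq_two_iff_exists_notMem_and.mpr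
    ⟨t, mem_sup_right (subset_closure rfl), ht, fun b hb => ?_⟩
  rw [← SetLike.mem_coe, hcoe] at hb
  obtain ⟨h, hh, _, ⟨n, rfl⟩, rfl⟩ := hb
  rcases zpow_mem_or_zpow_add_one_mem ht2 n with hn | hn
  · exact .inr (mul_mem hh hn)
  · exact .inl (by rw [mul_assoc, ← zpow_add_one]; exact mul_mem hh hn)

end Subgroup

section Cartan

variable {R : Type*} [CommRing R] (δ φ : R)

def cartanMatrix (a b : R) : Matrix (Fin 2) (Fin 2) R := !![a + b * φ, b; δ * b, a]

def gammaMatrix : Matrix (Fin 2) (Fin 2) R := !![-1, 0; φ, 1]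

theorem cartanMatrix_one_zero : cartanMatrix δ φ 1 0 = 1 := by
  ext i j; fin_cases i <;> fin_cases j <;> simp [cartanMatrix]

theorem cartanMatrix_mul_cartanMatrix (a b c d : R) :
    cartanMatrix δ φ a b * cartanMatrix δ φ c d =
      cartanMatrix δ φ (a * c + δ * b * d) (a * d + b * c + b * d * φ) := by
  ext i j; fin_cases i <;> fin_cases j <;>
    simp [cartanMatrix, Matrix.mul_apply, Fin.sum_univ_succ] <;> ring

theorem smul_cartanMatrix (r a b : R) :
    r • cartanMatrix δ φ a b = cartanMatrix δ φ (r * a) (r * b) := by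
  ext i j; fin_cases i <;> fin_cases j <;> simp [cartanMatrix] <;> ring

theorem adjugate_cartanMatrix (a b : R) :
    (cartanMatrix δ φ a b).adjugate = cartanMatrix δ φ (a + b * φ) (-b) := by
  rw [cartanMatrix, cartanMatrix, Matrix.adjugate_fin_two_of, neg_mul, mul_neg,
    add_neg_cancel_right]

theorem gammaMatrix_mul_cartanMatrix_mul_gammaMatrix (a b : R) :
    gammaMatrix φ * cartanMatrix δ φ a b * gammaMatrix φ =
      cartanMatrix δ φ (a + b * φ) (-b) := by
  ext i j; fin_cases i <;> fin_cases j <;>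
    simp [gammaMatrix, cartanMatrix, Matrix.mul_apply, Fin.sum_univ_succ] <;> ring

theorem gammaMatrix_ne_cartanMatrix (h2 : (2 : R) ≠ 0) (a b : R) :
    gammaMatrix φ ≠ cartanMatrix δ φ a b := by
  intro h
  have h00 : -1 = a + b * φ := congrFun (congrFun h 0) 0
  have h01 : 0 = b := congrFun (congrFun h 0) 1
  have h11 : 1 = a := congrFun (congrFun h 1) 1
  exact h2 (by linear_combination h11 - h00 + φ * h01)

def cartanSubgroup : Subgroup (GL (Fin 2) R) where
  carrier := {g | ∃ a b : R, (g : Matrix (Fin 2) (Fin 2) R) = cartanMatrix δ φ a b}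
  one_mem' := ⟨1, 0, (cartanMatrix_one_zero δ φ).symm⟩
  mul_mem' := by
    rintro x y ⟨a, b, hx⟩ ⟨c, d, hy⟩
    exact ⟨_, _, by rw [Units.val_mul, hx, hy, cartanMatrix_mul_cartanMatrix]⟩
  inv_mem' := by
    rintro x ⟨a, b, hx⟩
    exact ⟨_, _, by rw [Matrix.coe_units_inv, hx, Matrix.inv_def, adjugate_cartanMatrix,
      smul_cartanMatrix]⟩

end Cartan

theorem coe_gammaPhi (N : ℕ) (φ : ZMod N) :
    (gammaPhi N φ : Matrix (Fin 2) (Fin 2) (ZMod N)) = gammaMatrix φ := rfl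

theorem gammaPhi_inv (N : ℕ) (φ : ZMod N) : (gammaPhi N φ)⁻¹ = gammaPhi N φ := rfl

theorem gammaPhi_sq (N : ℕ) (φ : ZMod N) : gammaPhi N φ ^ 2 = 1 := by
  rw [sq]; nth_rw 2 [← gammaPhi_inv]; exact mul_inv_cancel _

theorem gammaPhi_mem_normalizer_cartanSubgroup (N : ℕ) (δ φ : ZMod N) :
    gammaPhi N φ ∈ Subgroup.normalizer (cartanSubgroup δ φ : Set (GL (Fin 2) (ZMod N))) := by
  refine Subgroup.mem_normalizer_of_conj_mem_of_sq_mem ?_ (gammaPhi_sq N φ ▸ one_mem _)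
  rintro g ⟨a, b, hg⟩
  refine ⟨a + b * φ, -b, ?_⟩
  rw [gammaPhi_inv, Units.val_mul, Units.val_mul, hg, coe_gammaPhi]
  exact gammaMatrix_mul_cartanMatrix_mul_gammaMatrix δ φ a b

theorem gammaPhi_notMem_cartanSubgroup {N : ℕ} (hN : 3 ≤ N) (δ φ : ZMod N) :
    gammaPhi N φ ∉ cartanSubgroup δ φ := by
  rintro ⟨a, b, h⟩
  refine gammaMatrix_ne_cartanMatrix δ φ ?_ a b h
  have : ¬ N ∣ 2 := fun hdvd => by have := Nat.le_of_dvd two_pos hdvd; omega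
  exact_mod_cast mt (ZMod.natCast_eq_zero_iff 2 N).mp this

/-- Let `N ≥ 3` and `δ, φ ∈ ℤ/Nℤ`. The set `C_{δ,φ}(N)` of invertible
matrices of the form `[[a+bφ, b],[δb, a]]` is a subgroup of `GL(2, ℤ/Nℤ)`, the matrix
`γ_φ = [[−1, 0],[φ, 1]]` does not belong to it, and `C_{δ,φ}(N)` has index `2` in
`N_{δ,φ}(N) = ⟨C_{δ,φ}(N), γ_φ⟩`. -/
theorem stmt_10 (N : ℕ) (hN : 3 ≤ N) (δ φ : ZMod N) :
    ∃ C : Subgroup (GL (Fin 2) (ZMod N)),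
      (C : Set (GL (Fin 2) (ZMod N))) =
        {g : GL (Fin 2) (ZMod N) | ∃ a b : ZMod N,
          (g : Matrix (Fin 2) (Fin 2) (ZMod N)) = !![a + b * φ, b; δ * b, a]} ∧
      gammaPhi N φ ∉ C ∧
      C.relIndex (C ⊔ Subgroup.closure {gammaPhi N φ}) = 2 := by
  have hγ := gammaPhi_notMem_cartanSubgroup hN δ φ
  refine ⟨cartanSubgroup δ φ, rfl, hγ, ?_⟩
  exact Subgroup.relIndex_sup_closure_singleton_eq_two hγ
    (gammaPhi_sq N φ ▸ one_mem _) (gammaPhi_mem_normalizer_cartanSubgroup N δ φ)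
end

section
/- Let C_{−7,0}(2^∞) be the subgroup of GL(2, ℤ₂) consisting of all invertible matrices of the form [[a, b],[−7b, a]] with a, b ∈ ℤ₂, and let N_{−7,0}(2^∞) be the subgroup generated by C_{−7,0}(2^∞) and the matrix [[−1, 0],[0, 1]]. Then −Id is the square of an element of N_{−7,0}(2^∞), and consequently every subgroup of N_{−7,0}(2^∞) of index 2 contains −Id. -/
open scoped MatrixGroups

/-- The involution `diag(−1, 1) = [[−1,0],[0,1]]` as an element of `GL(2, ℤ₂)`. -/
noncomputable def diagNegOneOne : GL (Fin 2) ℤ_[2] :=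
  ⟨!![-1, 0; 0, 1], !![-1, 0; 0, 1],
    by ext i j; fin_cases i <;> fin_cases j <;>
      simp [Matrix.mul_apply, Fin.sum_univ_succ],
    by ext i j; fin_cases i <;> fin_cases j <;>
      simp [Matrix.mul_apply, Fin.sum_univ_succ]⟩

/-- The Cartan subgroup `C_{−7,0}(2^∞)`: all invertible matrices `[[a, b],[−7b, a]]`
with `a, b ∈ ℤ₂`, as a subset of `GL(2, ℤ₂)`. -/
def cartanNeg7 : Set (GL (Fin 2) ℤ_[2]) :=
  {g | ∃ a b : ℤ_[2], (g : Matrix (Fin 2) (Fin 2) ℤ_[2]) = !![a, b; -7 * b, a]}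

/-- `N_{−7,0}(2^∞)`, the subgroup of `GL(2, ℤ₂)` generated by `C_{−7,0}(2^∞)` and
`[[−1,0],[0,1]]`. -/
noncomputable def normalizerNeg7 : Subgroup (GL (Fin 2) ℤ_[2]) :=
  Subgroup.closure (cartanNeg7 ∪ {diagNegOneOne})

/-!
Since `7 ≡ −1 (mod 8)`, Hensel's lemma gives `b ∈ ℤ₂` with `7b² = −1`. Then
`g = diag(−1, 1) · [[0, b], [−7b, 0]] = [[0, −b], [−7b, 0]]` lies in `N_{−7,0}(2^∞)` and
`g² = 7b² · Id = −Id`. Squares of elements of a group lie in each of its subgroups of index `2`.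
-/

theorem Subgroup.sq_mem_of_relIndex_eq_two {G : Type*} [Group G] {H K : Subgroup G}
    (h : H.relIndex K = 2) {g : G} (hg : g ∈ K) : g ^ 2 ∈ H :=
  Subgroup.mem_subgroupOf.1 (Subgroup.sq_mem_of_index_two h ⟨g, hg⟩)

open Polynomial in
lemma exists_seven_mul_sq_eq_neg_one : ∃ b : ℤ_[2], 7 * b ^ 2 = -1 := by
  have h2 : ‖(2 : ℤ_[2])‖ = 2⁻¹ := by simpa using PadicInt.norm_p (p := 2)
  have h7 : ‖(7 : ℤ_[2])‖ = 1 := by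
    exact_mod_cast PadicInt.norm_natCast_eq_one_iff.2 (by norm_num : Nat.Coprime 2 7)
  have h8 : ‖(8 : ℤ_[2])‖ = 8⁻¹ := by
    rw [show (8 : ℤ_[2]) = 2 ^ 3 by norm_num, norm_pow, h2]
    norm_num
  have h14 : ‖(14 : ℤ_[2])‖ = 2⁻¹ := by
    rw [show (14 : ℤ_[2]) = 2 * 7 by norm_num, norm_mul, h2, h7, mul_one]
  have hensel : ‖aeval (1 : ℤ_[2]) (C 7 * X ^ 2 + 1 : ℤ_[2][X])‖
      < ‖aeval (1 : ℤ_[2]) (derivative (C 7 * X ^ 2 + 1 : ℤ_[2][X]))‖ ^ 2 := by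
    norm_num [h8, h14]
  obtain ⟨b, hb, -⟩ := hensels_lemma hensel
  refine ⟨b, eq_neg_of_add_eq_zero_left ?_⟩
  simpa using hb

section Antidiagonal

variable {R : Type*} [CommRing R] {b : R}

lemma antidiagNeg7_mul_self (hb : 7 * b ^ 2 = -1) :
    !![0, b; -7 * b, 0] * !![0, b; -7 * b, 0] = (1 : Matrix (Fin 2) (Fin 2) R) := by
  ext i j
  fin_cases i <;> fin_cases j <;> simp [Matrix.mul_apply, Fin.sum_univ_succ] <;>
    linear_combination -hb

noncomputable def antidiagNeg7 (hb : 7 * b ^ 2 = -1) : GL (Fin 2) R :=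
  ⟨!![0, b; -7 * b, 0], !![0, b; -7 * b, 0], antidiagNeg7_mul_self hb, antidiagNeg7_mul_self hb⟩

end Antidiagonal

lemma antidiagNeg7_mem_cartanNeg7 {b : ℤ_[2]} (hb : 7 * b ^ 2 = -1) :
    antidiagNeg7 hb ∈ cartanNeg7 :=
  ⟨0, b, rfl⟩

lemma diagNegOneOne_mul_antidiagNeg7_sq {b : ℤ_[2]} (hb : 7 * b ^ 2 = -1) :
    (diagNegOneOne * antidiagNeg7 hb) ^ 2 = -1 := by
  ext : 1
  change (!![-1, 0; 0, 1] * !![0, b; -7 * b, 0]) ^ 2 = -(1 : Matrix (Fin 2) (Fin 2) ℤ_[2])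
  ext i j
  fin_cases i <;> fin_cases j <;> simp [pow_two, Matrix.mul_apply, Fin.sum_univ_succ] <;>
    linear_combination hb

lemma exists_mem_normalizerNeg7_sq_eq_neg_one :
    ∃ g ∈ normalizerNeg7, g ^ 2 = (-1 : GL (Fin 2) ℤ_[2]) := by
  obtain ⟨b, hb⟩ := exists_seven_mul_sq_eq_neg_one
  refine ⟨diagNegOneOne * antidiagNeg7 hb, mul_mem ?_ ?_, diagNegOneOne_mul_antidiagNeg7_sq hb⟩
  · exact Subgroup.subset_closure (Or.inr rfl)
  · exact Subgroup.subset_closure (Or.inl (antidiagNeg7_mem_cartanNeg7 hb))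

/-- `−Id` is the square of an element of `N_{−7,0}(2^∞)`, and consequently
every subgroup of `N_{−7,0}(2^∞)` of index `2` contains `−Id`. -/
theorem stmt_11 :
    (∃ g ∈ normalizerNeg7, g ^ 2 = (-1 : GL (Fin 2) ℤ_[2])) ∧
    ∀ H : Subgroup (GL (Fin 2) ℤ_[2]), H ≤ normalizerNeg7 →
      H.relIndex normalizerNeg7 = 2 → (-1 : GL (Fin 2) ℤ_[2]) ∈ H := by
  obtain ⟨g, hg, hg_sq⟩ := exists_mem_normalizerNeg7_sq_eq_neg_one
  refine ⟨⟨g, hg, hg_sq⟩, fun H _ hH => ?_⟩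
  rw [← hg_sq]
  exact Subgroup.sq_mem_of_relIndex_eq_two hH hg
end

section
/- In GL(2, ℤ/8ℤ), define the subgroups H_{1,3} = ⟨diag(1,−1), 3·Id, [[1,1],[−2,1]]⟩, H_{−1,3} = ⟨diag(−1,1), 3·Id, [[1,1],[−2,1]]⟩, H′_{1,3} = ⟨diag(1,−1), 3·Id, [[−1,−1],[2,−1]]⟩, H′_{−1,3} = ⟨diag(−1,1), 3·Id, [[−1,−1],[2,−1]]⟩, and H_{1,5} = ⟨diag(1,−1), 5·Id, [[1,1],[−2,1]]⟩. Then: (i) H_{1,3} is conjugate to H′_{1,3} and H_{−1,3} is conjugate to H′_{−1,3} in GL(2, ℤ/8ℤ); (ii) neither H_{1,3} nor H_{−1,3} contains −Id; (iii) H_{1,3} is not conjugate to H_{−1,3} in GL(2, ℤ/8ℤ); (iv) the subgroup generated by H_{1,3} and −Id equals the subgroup generated by H_{−1,3} and −Id, and both equal H_{1,5}. -/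
open scoped MatrixGroups

/-- The subgroup of `GL(2, ℤ/8ℤ)` generated by the elements whose underlying matrices lie
in the set `S` of matrices. -/
def glGen8 (S : Set (Matrix (Fin 2) (Fin 2) (ZMod 8))) : Subgroup (GL (Fin 2) (ZMod 8)) :=
  Subgroup.closure {g : GL (Fin 2) (ZMod 8) | (g : Matrix (Fin 2) (Fin 2) (ZMod 8)) ∈ S}

/-- `H_{1,3} = ⟨diag(1,−1), 3·Id, [[1,1],[−2,1]]⟩`. -/
def H13 : Subgroup (GL (Fin 2) (ZMod 8)) :=
  glGen8 {!![1, 0; 0, -1], (3 : Matrix (Fin 2) (Fin 2) (ZMod 8)), !![1, 1; -2, 1]}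

/-- `H_{−1,3} = ⟨diag(−1,1), 3·Id, [[1,1],[−2,1]]⟩`. -/
def Hm13 : Subgroup (GL (Fin 2) (ZMod 8)) :=
  glGen8 {!![-1, 0; 0, 1], (3 : Matrix (Fin 2) (Fin 2) (ZMod 8)), !![1, 1; -2, 1]}

/-- `H′_{1,3} = ⟨diag(1,−1), 3·Id, [[−1,−1],[2,−1]]⟩`. -/
def H13' : Subgroup (GL (Fin 2) (ZMod 8)) :=
  glGen8 {!![1, 0; 0, -1], (3 : Matrix (Fin 2) (Fin 2) (ZMod 8)), !![-1, -1; 2, -1]}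

/-- `H′_{−1,3} = ⟨diag(−1,1), 3·Id, [[−1,−1],[2,−1]]⟩`. -/
def Hm13' : Subgroup (GL (Fin 2) (ZMod 8)) :=
  glGen8 {!![-1, 0; 0, 1], (3 : Matrix (Fin 2) (Fin 2) (ZMod 8)), !![-1, -1; 2, -1]}

/-- `H_{1,5} = ⟨diag(1,−1), 5·Id, [[1,1],[−2,1]]⟩`. -/
def H15 : Subgroup (GL (Fin 2) (ZMod 8)) :=
  glGen8 {!![1, 0; 0, -1], (5 : Matrix (Fin 2) (Fin 2) (ZMod 8)), !![1, 1; -2, 1]}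

/-!
All four claims reduce to finite computations in `GL(2, ℤ/8ℤ)`. Write `D₁ = diag(1,−1)`,
`D₂ = diag(−1,1)`, `S₃ = 3·Id`, `S₅ = 5·Id`, `A = [[1,1],[−2,1]]` and `A' = −A`.

(i) Conjugation by `P = [[3,1],[2,7]]` sends every generator of `H_{±1,3}` into `H′_{±1,3}`
(e.g. `P A P⁻¹ = S₃ A'⁻³`), and conjugation by `P⁻¹` sends every generator of `H′_{±1,3}` back.

(ii) The 32 elements of `H_{1,3}` form an explicit list closed under multiplication, and a
multiplicatively closed subset of a finite group contains the subgroup generated by its elements;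
`−Id` is not on the list. Likewise for `H_{−1,3}`.

(iii) Characteristic polynomials do not tell the two groups apart, so we search: a `g` with
`g H_{1,3} g⁻¹ = H_{−1,3}` would satisfy `g D₁ = h₁ g` and `g A = h₂ g` with `h₁, h₂` on the list
of `H_{−1,3}`, and no invertible `g` does.

(iv) `S₃ = D₁ A D₁ A`, `S₅ = −S₃` and `D₂ = −D₁`.
-/

namespace Matrix

variable {R : Type*} [CommRing R]

/- A `2 × 2` matrix is encoded by its entries `(a, b, c, d)`, by rows. The kernel multiplies
such tuples far faster than `Matrix`es, whose entries are `Finset` sums; this is what makes the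
exhaustive searches below feasible. -/
def toQuad (m : Matrix (Fin 2) (Fin 2) R) : R × R × R × R :=
  (m 0 0, m 0 1, m 1 0, m 1 1)

def quadMul : R × R × R × R → R × R × R × R → R × R × R × R
  | (a, b, c, d), (e, f, g, h) => (a * e + b * g, a * f + b * h, c * e + d * g, c * f + d * h)

def quadDet : R × R × R × R → R
  | (a, b, c, d) => a * d - b * c

theorem toQuad_one : toQuad (1 : Matrix (Fin 2) (Fin 2) R) = (1, 0, 0, 1) := by
  simp [toQuad]

theorem toQuad_mul (m n : Matrix (Fin 2) (Fin 2) R) :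
    toQuad (m * n) = quadMul (toQuad m) (toQuad n) := by
  simp [toQuad, quadMul, mul_apply, Fin.sum_univ_two]

theorem quadDet_toQuad (m : Matrix (Fin 2) (Fin 2) R) : quadDet (toQuad m) = m.det := by
  simp [toQuad, quadDet, det_fin_two]

namespace GeneralLinearGroup

theorem toQuad_mem_of_mem_closure [Finite R] {L : List (R × R × R × R)}
    (one_mem : (1, 0, 0, 1) ∈ L) (mul_mem : ∀ x ∈ L, ∀ y ∈ L, quadMul x y ∈ L)
    {s : Set (GL (Fin 2) R)} (hs : ∀ g ∈ s, toQuad (g : Matrix (Fin 2) (Fin 2) R) ∈ L)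
    {g : GL (Fin 2) R} (hg : g ∈ Subgroup.closure s) :
    toQuad (g : Matrix (Fin 2) (Fin 2) R) ∈ L := by
  rw [← Subgroup.mem_toSubmonoid, Subgroup.closure_toSubmonoid_of_finite] at hg
  induction hg using Submonoid.closure_induction with
  | mem g hg => exact hs g hg
  | one => rwa [Units.val_one, toQuad_one]
  | mul g h _ _ hg hh => rw [Units.val_mul, toQuad_mul]; exact mul_mem _ hg _ hh

theorem toQuad_mul_eq_toQuad_conj_mul (g x : GL (Fin 2) R) :
    quadMul (toQuad (g : Matrix (Fin 2) (Fin 2) R)) (toQuad (x : Matrix (Fin 2) (Fin 2) R)) =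
      quadMul (toQuad ((g * x * g⁻¹ : GL (Fin 2) R) : Matrix (Fin 2) (Fin 2) R))
        (toQuad (g : Matrix (Fin 2) (Fin 2) R)) := by
  rw [← toQuad_mul, ← toQuad_mul, ← Units.val_mul, ← Units.val_mul, inv_mul_cancel_right]

theorem isUnit_quadDet_toQuad (g : GL (Fin 2) R) :
    IsUnit (quadDet (toQuad (g : Matrix (Fin 2) (Fin 2) R))) := by
  rw [quadDet_toQuad]
  exact (det g).isUnit

end GeneralLinearGroup

end Matrix

theorem Subgroup.map_conj_closure_eq {G : Type*} [Group G] {s t : Set G} {g : G}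
    (hs : ∀ x ∈ s, g * x * g⁻¹ ∈ closure t) (ht : ∀ y ∈ t, g⁻¹ * y * g ∈ closure s) :
    (closure s).map (MulAut.conj g).toMonoidHom = closure t := by
  refine le_antisymm (map_le_iff_le_comap.2 <| (closure_le _).2 hs)
    ((closure_le _).2 fun y hy ↦ ?_)
  exact ⟨_, ht y hy, by simp [mul_assoc]⟩

namespace GL2ZMod8

open Matrix Matrix.GeneralLinearGroup

def D₁ : GL (Fin 2) (ZMod 8) := ⟨!![1, 0; 0, -1], !![1, 0; 0, -1], by decide, by decide⟩
def D₂ : GL (Fin 2) (ZMod 8) := ⟨!![-1, 0; 0, 1], !![-1, 0; 0, 1], by decide, by decide⟩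
def S₃ : GL (Fin 2) (ZMod 8) := ⟨3, 3, by decide, by decide⟩
def S₅ : GL (Fin 2) (ZMod 8) := ⟨5, 5, by decide, by decide⟩
def A : GL (Fin 2) (ZMod 8) := ⟨!![1, 1; -2, 1], !![3, 5; 6, 3], by decide, by decide⟩
def A' : GL (Fin 2) (ZMod 8) := ⟨!![-1, -1; 2, -1], !![-3, -5; -6, -3], by decide, by decide⟩
def P : GL (Fin 2) (ZMod 8) := ⟨!![3, 1; 2, 7], !![5, 5; 2, 1], by decide, by decide⟩

theorem glGen8_eq_closure (x y z : GL (Fin 2) (ZMod 8)) :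
    glGen8 {(x : Matrix (Fin 2) (Fin 2) (ZMod 8)), ↑y, ↑z} = Subgroup.closure {x, y, z} := by
  simp only [glGen8, Set.mem_insert_iff, Set.mem_singleton_iff, ← Units.ext_iff]
  rfl

theorem H13_eq : H13 = Subgroup.closure {D₁, S₃, A} := glGen8_eq_closure D₁ S₃ A
theorem Hm13_eq : Hm13 = Subgroup.closure {D₂, S₃, A} := glGen8_eq_closure D₂ S₃ A
theorem H13'_eq : H13' = Subgroup.closure {D₁, S₃, A'} := glGen8_eq_closure D₁ S₃ A'
theorem Hm13'_eq : Hm13' = Subgroup.closure {D₂, S₃, A'} := glGen8_eq_closure D₂ S₃ A'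
theorem H15_eq : H15 = Subgroup.closure {D₁, S₅, A} := glGen8_eq_closure D₁ S₅ A

theorem map_conj_P_closure {x : GL (Fin 2) (ZMod 8)} (hx : P * x * P⁻¹ = A'⁻¹ * x * A')
    (hx' : P⁻¹ * x * P = A * x * A⁻¹) :
    (Subgroup.closure {x, S₃, A}).map (MulAut.conj P).toMonoidHom =
      Subgroup.closure {x, S₃, A'} := by
  have hS₃ : P * S₃ * P⁻¹ = S₃ := by decide
  have hS₃' : P⁻¹ * S₃ * P = S₃ := by decide
  have hA : P * A * P⁻¹ = S₃ * A'⁻¹ ^ 3 := by decide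
  have hA' : P⁻¹ * A' * P = S₃ * A⁻¹ ^ 3 := by decide
  apply Subgroup.map_conj_closure_eq
  · simp only [Set.forall_mem_insert, Set.mem_singleton_iff, forall_eq, hx, hS₃, hA]
    set K := Subgroup.closure {x, S₃, A'}
    have mem_x : x ∈ K := Subgroup.subset_closure (by simp)
    have mem_S₃ : S₃ ∈ K := Subgroup.subset_closure (by simp)
    have mem_A' : A' ∈ K := Subgroup.subset_closure (by simp)
    exact ⟨mul_mem (mul_mem (inv_mem mem_A') mem_x) mem_A', mem_S₃,
      mul_mem mem_S₃ (pow_mem (inv_mem mem_A') 3)⟩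
  · simp only [Set.forall_mem_insert, Set.mem_singleton_iff, forall_eq, hx', hS₃', hA']
    set K := Subgroup.closure {x, S₃, A}
    have mem_x : x ∈ K := Subgroup.subset_closure (by simp)
    have mem_S₃ : S₃ ∈ K := Subgroup.subset_closure (by simp)
    have mem_A : A ∈ K := Subgroup.subset_closure (by simp)
    exact ⟨mul_mem (mul_mem mem_A mem_x) (inv_mem mem_A), mem_S₃,
      mul_mem mem_S₃ (pow_mem (inv_mem mem_A) 3)⟩

theorem H13_sup_neg_one : H13 ⊔ Subgroup.closure {-1} = H15 := by
  rw [H13_eq, H15_eq, ← Subgroup.closure_union]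
  have hS₃ : S₃ = D₁ * A * D₁ * A := by decide
  have hS₅ : S₅ = -1 * S₃ := by decide
  have hneg : (-1 : GL (Fin 2) (ZMod 8)) = S₅ * S₃ := by decide
  apply le_antisymm <;> rw [Subgroup.closure_le] <;>
    simp only [Set.union_subset_iff, Set.insert_subset_iff, Set.singleton_subset_iff,
      SetLike.mem_coe]
  · set K := Subgroup.closure {D₁, S₅, A}
    have mem_D₁ : D₁ ∈ K := Subgroup.subset_closure (by simp)
    have mem_S₅ : S₅ ∈ K := Subgroup.subset_closure (by simp)
    have mem_A : A ∈ K := Subgroup.subset_closure (by simp)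
    have mem_S₃ : S₃ ∈ K := hS₃ ▸ mul_mem (mul_mem (mul_mem mem_D₁ mem_A) mem_D₁) mem_A
    exact ⟨⟨mem_D₁, mem_S₃, mem_A⟩, hneg ▸ mul_mem mem_S₅ mem_S₃⟩
  · set K := Subgroup.closure ({D₁, S₃, A} ∪ {-1})
    have mem_S₃ : S₃ ∈ K := Subgroup.subset_closure (by simp)
    have mem_neg : -1 ∈ K := Subgroup.subset_closure (by simp)
    exact ⟨Subgroup.subset_closure (by simp), hS₅ ▸ mul_mem mem_neg mem_S₃,
      Subgroup.subset_closure (by simp)⟩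

theorem Hm13_sup_neg_one : Hm13 ⊔ Subgroup.closure {-1} = H13 ⊔ Subgroup.closure {-1} := by
  rw [Hm13_eq, H13_eq, ← Subgroup.closure_union, ← Subgroup.closure_union]
  have hD₂ : D₂ = -1 * D₁ := by decide
  have hD₁ : D₁ = -1 * D₂ := by decide
  apply le_antisymm <;> rw [Subgroup.closure_le] <;>
    simp only [Set.union_subset_iff, Set.insert_subset_iff, Set.singleton_subset_iff,
      SetLike.mem_coe]
  · set K := Subgroup.closure ({D₁, S₃, A} ∪ {-1})
    have mem_D₁ : D₁ ∈ K := Subgroup.subset_closure (by simp)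
    have mem_neg : -1 ∈ K := Subgroup.subset_closure (by simp)
    exact ⟨⟨hD₂ ▸ mul_mem mem_neg mem_D₁, Subgroup.subset_closure (by simp),
      Subgroup.subset_closure (by simp)⟩, mem_neg⟩
  · set K := Subgroup.closure ({D₂, S₃, A} ∪ {-1})
    have mem_D₂ : D₂ ∈ K := Subgroup.subset_closure (by simp)
    have mem_neg : -1 ∈ K := Subgroup.subset_closure (by simp)
    exact ⟨⟨hD₁ ▸ mul_mem mem_neg mem_D₂, Subgroup.subset_closure (by simp),
      Subgroup.subset_closure (by simp)⟩, mem_neg⟩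

/- The elements of `H_{1,3}` and of `H_{−1,3}`, encoded by `toQuad`. -/
def H13Entries : List (ZMod 8 × ZMod 8 × ZMod 8 × ZMod 8) :=
  [(1, 0, 0, 1), (1, 0, 0, 7), (1, 1, 2, 7), (1, 1, 6, 1), (1, 3, 2, 1), (1, 3, 6, 7),
   (1, 4, 0, 1), (1, 4, 0, 7), (1, 5, 2, 7), (1, 5, 6, 1), (1, 7, 2, 1), (1, 7, 6, 7),
   (3, 0, 0, 3), (3, 0, 0, 5), (3, 1, 2, 5), (3, 1, 6, 3), (3, 3, 2, 3), (3, 3, 6, 5),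
   (3, 4, 0, 3), (3, 4, 0, 5), (3, 5, 2, 5), (3, 5, 6, 3), (3, 7, 2, 3), (3, 7, 6, 5),
   (5, 2, 4, 3), (5, 2, 4, 5), (5, 6, 4, 3), (5, 6, 4, 5),
   (7, 2, 4, 1), (7, 2, 4, 7), (7, 6, 4, 1), (7, 6, 4, 7)]

def Hm13Entries : List (ZMod 8 × ZMod 8 × ZMod 8 × ZMod 8) :=
  [(1, 0, 0, 1), (1, 1, 6, 1), (1, 2, 4, 7), (1, 3, 2, 1), (1, 4, 0, 1), (1, 5, 6, 1),
   (1, 6, 4, 7), (1, 7, 2, 1), (3, 0, 0, 3), (3, 1, 6, 3), (3, 2, 4, 5), (3, 3, 2, 3),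
   (3, 4, 0, 3), (3, 5, 6, 3), (3, 6, 4, 5), (3, 7, 2, 3), (5, 0, 0, 3), (5, 1, 2, 3),
   (5, 2, 4, 5), (5, 3, 6, 3), (5, 4, 0, 3), (5, 5, 2, 3), (5, 6, 4, 5), (5, 7, 6, 3),
   (7, 0, 0, 1), (7, 1, 2, 1), (7, 2, 4, 7), (7, 3, 6, 1), (7, 4, 0, 1), (7, 5, 2, 1),
   (7, 6, 4, 7), (7, 7, 6, 1)]

/- The closure checks and the search are phrased with `List.all` and `List.any`, which the kernel
evaluates much faster than the corresponding bounded quantifiers. -/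
theorem H13Entries_mul_mem : ∀ x ∈ H13Entries, ∀ y ∈ H13Entries, quadMul x y ∈ H13Entries := by
  simpa using (by decide +kernel :
    (H13Entries.all fun x => H13Entries.all fun y => quadMul x y ∈ H13Entries) = true)

theorem Hm13Entries_mul_mem :
    ∀ x ∈ Hm13Entries, ∀ y ∈ Hm13Entries, quadMul x y ∈ Hm13Entries := by
  simpa using (by decide +kernel :
    (Hm13Entries.all fun x => Hm13Entries.all fun y => quadMul x y ∈ Hm13Entries) = true)

theorem toQuad_mem_H13Entries {g : GL (Fin 2) (ZMod 8)} (hg : g ∈ H13) :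
    toQuad (g : Matrix (Fin 2) (Fin 2) (ZMod 8)) ∈ H13Entries := by
  rw [H13_eq] at hg
  refine toQuad_mem_of_mem_closure (by decide) H13Entries_mul_mem ?_ hg
  simp only [Set.forall_mem_insert, Set.mem_singleton_iff, forall_eq]
  decide

theorem toQuad_mem_Hm13Entries {g : GL (Fin 2) (ZMod 8)} (hg : g ∈ Hm13) :
    toQuad (g : Matrix (Fin 2) (Fin 2) (ZMod 8)) ∈ Hm13Entries := by
  rw [Hm13_eq] at hg
  refine toQuad_mem_of_mem_closure (by decide) Hm13Entries_mul_mem ?_ hg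
  simp only [Set.forall_mem_insert, Set.mem_singleton_iff, forall_eq]
  decide

theorem neg_one_notMem_H13 : (-1 : GL (Fin 2) (ZMod 8)) ∉ H13 :=
  fun h ↦ absurd (toQuad_mem_H13Entries h) (by decide)

theorem neg_one_notMem_Hm13 : (-1 : GL (Fin 2) (ZMod 8)) ∉ Hm13 :=
  fun h ↦ absurd (toQuad_mem_Hm13Entries h) (by decide)

def allResidues : List (ZMod 8) := List.finRange 8

theorem mem_allResidues (x : ZMod 8) : x ∈ allResidues := List.mem_finRange x

theorem false_of_quad_conj_mem_Hm13Entries (x : ZMod 8 × ZMod 8 × ZMod 8 × ZMod 8)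
    (hx : IsUnit (quadDet x))
    (hD₁ : ∃ y ∈ Hm13Entries, quadMul x (toQuad ↑D₁) = quadMul y x)
    (hA : ∃ y ∈ Hm13Entries, quadMul x (toQuad ↑A) = quadMul y x) : False := by
  have h := (by decide +kernel : (allResidues.all fun a => allResidues.all fun b =>
    allResidues.all fun c => allResidues.all fun d =>
      !(decide (IsUnit (quadDet (a, b, c, d)))
        && (Hm13Entries.any fun y => quadMul (a, b, c, d) (toQuad ↑D₁) = quadMul y (a, b, c, d))
        && (Hm13Entries.any fun y => quadMul (a, b, c, d) (toQuad ↑A) = quadMul y (a, b, c, d))))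
      = true)
  simp only [List.all_eq_true, mem_allResidues, forall_const] at h
  obtain ⟨y₁, hy₁, e₁⟩ := hD₁
  obtain ⟨y₂, hy₂, e₂⟩ := hA
  obtain ⟨a, b, c, d⟩ := x
  have habcd := h a b c d
  rw [decide_eq_true hx, List.any_eq_true.2 ⟨y₁, hy₁, decide_eq_true e₁⟩,
    List.any_eq_true.2 ⟨y₂, hy₂, decide_eq_true e₂⟩] at habcd
  exact Bool.false_ne_true habcd

theorem not_exists_map_conj_H13_eq_Hm13 :
    ¬ ∃ g : GL (Fin 2) (ZMod 8), H13.map (MulAut.conj g).toMonoidHom = Hm13 := by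
  rintro ⟨g, hg⟩
  have toQuad_conj_mem {x} (hx : x ∈ H13) :
      toQuad ((g * x * g⁻¹ : GL (Fin 2) (ZMod 8)) : Matrix (Fin 2) (Fin 2) (ZMod 8)) ∈
        Hm13Entries :=
    toQuad_mem_Hm13Entries (hg ▸ Subgroup.mem_map_of_mem _ hx)
  have mem_D₁ : D₁ ∈ H13 := H13_eq ▸ Subgroup.subset_closure (by simp)
  have mem_A : A ∈ H13 := H13_eq ▸ Subgroup.subset_closure (by simp)
  exact false_of_quad_conj_mem_Hm13Entries _ (isUnit_quadDet_toQuad g)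
    ⟨_, toQuad_conj_mem mem_D₁, toQuad_mul_eq_toQuad_conj_mul g D₁⟩
    ⟨_, toQuad_conj_mem mem_A, toQuad_mul_eq_toQuad_conj_mul g A⟩

end GL2ZMod8

open GL2ZMod8 in
/-- In `GL(2, ℤ/8ℤ)`: (i) `H_{1,3}` is conjugate to `H′_{1,3}` and
`H_{−1,3}` is conjugate to `H′_{−1,3}`; (ii) neither `H_{1,3}` nor `H_{−1,3}` contains
`−Id`; (iii) `H_{1,3}` is not conjugate to `H_{−1,3}`; (iv) `⟨H_{1,3}, −Id⟩ =
⟨H_{−1,3}, −Id⟩ = H_{1,5}`. -/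
theorem stmt_13 :
    (∃ g : GL (Fin 2) (ZMod 8), H13.map (MulAut.conj g).toMonoidHom = H13') ∧
    (∃ g : GL (Fin 2) (ZMod 8), Hm13.map (MulAut.conj g).toMonoidHom = Hm13') ∧
    ((-1 : GL (Fin 2) (ZMod 8)) ∉ H13 ∧ (-1 : GL (Fin 2) (ZMod 8)) ∉ Hm13) ∧
    (¬ ∃ g : GL (Fin 2) (ZMod 8), H13.map (MulAut.conj g).toMonoidHom = Hm13) ∧
    (H13 ⊔ Subgroup.closure {(-1 : GL (Fin 2) (ZMod 8))} =
        Hm13 ⊔ Subgroup.closure {(-1 : GL (Fin 2) (ZMod 8))} ∧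
      H13 ⊔ Subgroup.closure {(-1 : GL (Fin 2) (ZMod 8))} = H15) := by
  refine ⟨⟨P, ?_⟩, ⟨P, ?_⟩, ⟨neg_one_notMem_H13, neg_one_notMem_Hm13⟩,
    not_exists_map_conj_H13_eq_Hm13, Hm13_sup_neg_one.symm, H13_sup_neg_one⟩
  · rw [H13_eq, H13'_eq]
    exact map_conj_P_closure (by decide) (by decide)
  · rw [Hm13_eq, Hm13'_eq]
    exact map_conj_P_closure (by decide) (by decide)
end
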